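/- For a continuous free action μ of S¹ on S¹, choosing any base point s ∈ S¹, the map g ↦ μ(g, s) is a homeomorphism from S¹ onto S¹; in particular the action is transitive. -/

import Mathlib

/-!
The orbit map of a free action is injective, so it suffices to show that a continuous injection
`f : S¹ → S¹` is onto; a continuous bijection from a compact space to a Hausdorff one is then a
homeomorphism. If `f` missed a point `y`, then `x ↦ arg (-f x / y)` would be a continuous
injection `S¹ → ℝ`. None exists: for any continuous `g : S¹ → ℝ`, the odd function
`x ↦ g x - g (-x)` vanishes somewhere by the intermediate value theorem, so `g x = g (-x)`.
-/

open Complex Function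

lemma Circle.coe_mem_slitPlane {z : Circle} (hz : z ≠ -1) : (z : ℂ) ∈ slitPlane :=
  mem_slitPlane_iff_arg.2 ⟨fun h => hz (Circle.arg_eq_arg.1 (by simpa using h)), z.coe_ne_zero⟩

lemma Circle.not_injective_of_continuous {g : Circle → ℝ} (hg : Continuous g) :
    ¬ Injective g := by
  intro hinj
  set G : Circle → ℝ := fun x => g x - g (-x)
  have hG : Continuous G := hg.sub (hg.comp continuous_neg)
  have hG_neg : G (-1) = -G 1 := by simp [G]
  obtain ⟨x, hx⟩ : ∃ x, G x = 0 := by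
    rcases le_total (G 1) 0 with h | h
    · exact intermediate_value_univ 1 (-1) hG ⟨h, by linarith⟩
    · exact intermediate_value_univ (-1) 1 hG ⟨by linarith, h⟩
  exact Circle.neg_ne_self x (hinj (sub_eq_zero.1 hx)).symm

lemma Circle.surjective_of_continuous_of_injective {f : Circle → Circle} (hf : Continuous f)
    (hinj : Injective f) : Surjective f := by
  intro y
  by_contra! hy
  let h : Circle → Circle := fun x => -(x / y)
  have h_ne (x : Circle) : h (f x) ≠ -1 := by
    simpa [h, div_eq_one] using hy x
  refine Circle.not_injective_of_continuous (g := fun x => arg (h (f x))) ?_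
    (Circle.injective_arg.comp ((neg_injective.comp (div_left_injective (b := y))).comp hinj))
  exact continuous_iff_continuousAt.2 fun x =>
    (continuousAt_arg (Circle.coe_mem_slitPlane (h_ne x))).comp (f := fun x => (h (f x) : ℂ))
      (continuous_subtype_val.comp (((continuous_id.div_const y).neg).comp hf)).continuousAt

lemma injective_orbit_map_of_free {G X : Type*} [Group G] (μ : G → X → X)
    (hone : ∀ x, μ 1 x = x) (hmul : ∀ g h x, μ (g * h) x = μ g (μ h x))
    (hfree : ∀ g x, μ g x = x → g = 1) (s : X) : Injective fun g => μ g s := by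
  intro a b hab
  have : μ (b⁻¹ * a) s = s := by
    rw [hmul, show μ a s = μ b s from hab, ← hmul, inv_mul_cancel, hone]
  exact (inv_mul_eq_one.1 (hfree _ _ this)).symm

/-- For a continuous free action `μ` of `S¹` on `S¹` and any base point `s`, the orbit
map `g ↦ μ g s` is a homeomorphism of `S¹` onto `S¹`; in particular the action is
transitive. -/
theorem stmt1
    (μ : Circle → Circle → Circle)
    (hone : ∀ x, μ 1 x = x)
    (hmul : ∀ g h x, μ (g * h) x = μ g (μ h x))
    (hcont : Continuous fun p : Circle × Circle => μ p.1 p.2)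
    (hfree : ∀ g x, μ g x = x → g = 1)
    (s : Circle) :
    (∃ Ψ : Circle ≃ₜ Circle, ∀ g : Circle, Ψ g = μ g s) ∧
    (∀ y : Circle, ∃ g : Circle, μ g s = y) := by
  have hf : Continuous fun g => μ g s := hcont.comp (continuous_id.prodMk continuous_const)
  have hinj := injective_orbit_map_of_free μ hone hmul hfree s
  have hsurj := Circle.surjective_of_continuous_of_injective hf hinj
  exact ⟨⟨Continuous.homeoOfEquivCompactToT2 (f := Equiv.ofBijective _ ⟨hinj, hsurj⟩) hf,
    fun _ => rfl⟩, hsurj⟩
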